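/- arXiv:2601.04198 — 4 statements merged into one kernel-verified Lean document; each statement's English description precedes it below -/
import Mathlib

section
/- For any α > 0, every L ∈ 𝓛_α satisfies the uniform stability bound ‖(A − LC)^i‖ ≤ γ λ^i for all i ∈ ℕ, with γ = √(1 + α⁻¹) and λ = 1/√(1 + α) ∈ (0,1). -/
open Matrix

/-- Operator norm induced by the Euclidean norm. -/
noncomputable def opNorm {a b : ℕ} (M : Matrix (Fin a) (Fin b) ℝ) : ℝ :=
  ‖LinearMap.toContinuousLinearMap (Matrix.toEuclideanLin M)‖

/-- The feasible set `𝓛_α` of gains `L` such that the Lyapunov equation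
`P = (A − LC) P (A − LC)ᵀ + I` has a positive semidefinite solution with
`α Tr(P − I) ≤ 1`. -/
def Lset {n q : ℕ} (A : Matrix (Fin n) (Fin n) ℝ) (C : Matrix (Fin q) (Fin n) ℝ)
    (α : ℝ) : Set (Matrix (Fin n) (Fin q) ℝ) :=
  {L | ∃ P : Matrix (Fin n) (Fin n) ℝ, P.PosSemidef ∧
    P = (A - L * C) * P * (A - L * C)ᵀ + 1 ∧ α * (P - 1).trace ≤ 1}

lemma dot_self_nonneg' {n : ℕ} (v : Fin n → ℝ) : 0 ≤ v ⬝ᵥ v :=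
  Finset.sum_nonneg fun _ _ => mul_self_nonneg _

lemma quad_nonneg {n : ℕ} {Q : Matrix (Fin n) (Fin n) ℝ} (hQ : Q.PosSemidef)
    (v : Fin n → ℝ) : 0 ≤ v ⬝ᵥ (Q *ᵥ v) := by
  simpa using hQ.dotProduct_mulVec_nonneg v

/-- Cauchy–Schwarz for the real dot product. -/
lemma dot_le_sqrt_mul_sqrt {n : ℕ} (w u : Fin n → ℝ) :
    w ⬝ᵥ u ≤ Real.sqrt (w ⬝ᵥ w) * Real.sqrt (u ⬝ᵥ u) := by
  have hcs := Finset.sum_mul_sq_le_sq_mul_sq Finset.univ w u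
  have h1 : w ⬝ᵥ u ≤ Real.sqrt ((w ⬝ᵥ u) ^ 2) := by
    rw [Real.sqrt_sq_eq_abs]; exact le_abs_self _
  refine h1.trans ?_
  rw [← Real.sqrt_mul (dot_self_nonneg' w)]
  apply Real.sqrt_le_sqrt
  have hw : w ⬝ᵥ w = ∑ i, w i ^ 2 := by simp [dotProduct, sq]
  have hu : u ⬝ᵥ u = ∑ i, u i ^ 2 := by simp [dotProduct, sq]
  rw [hw, hu]
  simpa [dotProduct] using hcs

open scoped MatrixOrder in
/-- The quadratic form of a PSD matrix is bounded by its trace times `‖v‖²`. -/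
lemma quad_le_trace {n : ℕ} {Q : Matrix (Fin n) (Fin n) ℝ} (hQ : Q.PosSemidef)
    (v : Fin n → ℝ) : v ⬝ᵥ (Q *ᵥ v) ≤ Q.trace * (v ⬝ᵥ v) := by
  obtain ⟨B, hB⟩ := CStarAlgebra.nonneg_iff_eq_star_mul_self.mp hQ.nonneg
  obtain rfl : Q = Bᴴ * B := hB
  have hBt : Bᴴ = Bᵀ := by
    ext i j; simp [Matrix.conjTranspose_apply]
  have h1 : v ⬝ᵥ ((Bᴴ * B) *ᵥ v) = (B *ᵥ v) ⬝ᵥ (B *ᵥ v) := by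
    rw [hBt, ← Matrix.mulVec_mulVec, Matrix.dotProduct_mulVec, Matrix.vecMul_transpose]
  rw [h1]
  have h2 : ∀ i, (B *ᵥ v) i * (B *ᵥ v) i ≤ (∑ j, B i j ^ 2) * (v ⬝ᵥ v) := by
    intro i
    have hcs := Finset.sum_mul_sq_le_sq_mul_sq Finset.univ (fun j => B i j) v
    have hv : v ⬝ᵥ v = ∑ j, v j ^ 2 := by simp [dotProduct, sq]
    have hBv : (B *ᵥ v) i = ∑ j, B i j * v j := rfl
    calc (B *ᵥ v) i * (B *ᵥ v) i = (∑ j, B i j * v j) ^ 2 := by rw [hBv, sq]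
      _ ≤ (∑ j, B i j ^ 2) * ∑ j, v j ^ 2 := hcs
      _ = (∑ j, B i j ^ 2) * (v ⬝ᵥ v) := by rw [hv]
  calc (B *ᵥ v) ⬝ᵥ (B *ᵥ v) = ∑ i, (B *ᵥ v) i * (B *ᵥ v) i := rfl
    _ ≤ ∑ i, (∑ j, B i j ^ 2) * (v ⬝ᵥ v) := Finset.sum_le_sum fun i _ => h2 i
    _ = (∑ i, ∑ j, B i j ^ 2) * (v ⬝ᵥ v) := by rw [← Finset.sum_mul]
    _ = (Bᴴ * B).trace * (v ⬝ᵥ v) := by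
        congr 1
        rw [Matrix.trace]
        simp only [Matrix.diag_apply, Matrix.mul_apply, Matrix.conjTranspose_apply,
          star_trivial]
        rw [Finset.sum_comm]
        refine Finset.sum_congr rfl fun i _ => Finset.sum_congr rfl fun j _ => by ring

lemma euclid_norm_eq_sqrt_dot {n : ℕ} (y : EuclideanSpace ℝ (Fin n)) :
    ‖y‖ = Real.sqrt ((WithLp.equiv 2 (Fin n → ℝ) y) ⬝ᵥ (WithLp.equiv 2 (Fin n → ℝ) y)) := by
  rw [EuclideanSpace.norm_eq]
  congr 1
  simp [dotProduct, Real.norm_eq_abs, ← sq, sq_abs]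

lemma real_sqrt_pow' {x : ℝ} (hx : 0 ≤ x) (i : ℕ) :
    Real.sqrt (x ^ i) = (Real.sqrt x) ^ i := by
  have h1 : ((Real.sqrt x) ^ i) ^ 2 = x ^ i := by
    rw [← pow_mul, mul_comm, pow_mul, Real.sq_sqrt hx]
  rw [← h1, Real.sqrt_sq_eq_abs, abs_of_nonneg (by positivity)]

/-- For any `α > 0`, every `L ∈ 𝓛_α` satisfies the uniform stability bound
`‖(A − LC)^i‖ ≤ γ λ^i` with `γ = √(1 + α⁻¹)` and `λ = 1/√(1 + α) ∈ (0,1)`. -/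
theorem Lset_uniformly_stable {n q : ℕ}
    (A : Matrix (Fin n) (Fin n) ℝ) (C : Matrix (Fin q) (Fin n) ℝ)
    (α : ℝ) (hα : 0 < α) :
    (1 / Real.sqrt (1 + α)) ∈ Set.Ioo (0 : ℝ) 1 ∧
    ∀ L ∈ Lset A C α, ∀ i : ℕ,
      opNorm ((A - L * C) ^ i) ≤ Real.sqrt (1 + α⁻¹) * (1 / Real.sqrt (1 + α)) ^ i := by
  have hα1 : (0 : ℝ) < 1 + α := by linarith
  have hαne : α ≠ 0 := ne_of_gt hα
  have hα1ne : (1 : ℝ) + α ≠ 0 := ne_of_gt hα1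
  have hs : 0 < Real.sqrt (1 + α) := Real.sqrt_pos.mpr hα1
  have hc : (0 : ℝ) < 1 + α⁻¹ := by positivity
  set μ : ℝ := (1 + α)⁻¹ with hμdef
  have hμpos : 0 < μ := by positivity
  constructor
  · refine ⟨by positivity, ?_⟩
    rw [div_lt_one hs]
    have h1 : Real.sqrt 1 < Real.sqrt (1 + α) := Real.sqrt_lt_sqrt (by norm_num) (by linarith)
    simpa using h1
  · rintro L ⟨P, hP, hLyap, htr⟩ i
    set F := A - L * C with hF
    have hPm1 : P - 1 = F * P * Fᵀ := by conv_lhs => rw [hLyap, add_sub_cancel_right]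
    have hFt : Fᵀ = Fᴴ := by ext i j; simp [Matrix.conjTranspose_apply]
    have hPI : (P - 1).PosSemidef := by
      rw [hPm1, hFt]
      exact hP.mul_mul_conjTranspose_same F
    have htr' : (P - 1).trace ≤ α⁻¹ := by
      rw [← mul_le_mul_iff_right₀ hα, mul_inv_cancel₀ hαne]; exact htr
    have lower : ∀ v : Fin n → ℝ, v ⬝ᵥ v ≤ v ⬝ᵥ (P *ᵥ v) := by
      intro v
      have h0 := quad_nonneg hPI v
      have hsub : (P - 1) *ᵥ v = P *ᵥ v - v := by
        rw [Matrix.sub_mulVec, Matrix.one_mulVec]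
      rw [hsub, dotProduct_sub] at h0
      linarith
    have upper : ∀ v : Fin n → ℝ, v ⬝ᵥ (P *ᵥ v) ≤ (1 + α⁻¹) * (v ⬝ᵥ v) := by
      intro v
      have h1 := quad_le_trace hPI v
      have hsub : (P - 1) *ᵥ v = P *ᵥ v - v := by
        rw [Matrix.sub_mulVec, Matrix.one_mulVec]
      rw [hsub, dotProduct_sub] at h1
      have h3 : (P - 1).trace * (v ⬝ᵥ v) ≤ α⁻¹ * (v ⬝ᵥ v) :=
        mul_le_mul_of_nonneg_right htr' (dot_self_nonneg' v)
      nlinarith [dot_self_nonneg' v]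
    have step : ∀ v : Fin n → ℝ,
        (Fᵀ *ᵥ v) ⬝ᵥ (P *ᵥ (Fᵀ *ᵥ v)) = v ⬝ᵥ (P *ᵥ v) - v ⬝ᵥ v := by
      intro v
      have h1 : v ⬝ᵥ ((F * P * Fᵀ) *ᵥ v) = (Fᵀ *ᵥ v) ⬝ᵥ (P *ᵥ (Fᵀ *ᵥ v)) := by
        rw [← Matrix.mulVec_mulVec, ← Matrix.mulVec_mulVec, Matrix.dotProduct_mulVec,
          ← Matrix.mulVec_transpose]
      rw [← h1, ← hPm1, Matrix.sub_mulVec, Matrix.one_mulVec, dotProduct_sub]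
    have mono : ∀ v : Fin n → ℝ,
        (Fᵀ *ᵥ v) ⬝ᵥ (P *ᵥ (Fᵀ *ᵥ v)) ≤ μ * (v ⬝ᵥ (P *ᵥ v)) := by
      intro v
      rw [step v]
      have hu := upper v
      have hgnn : 0 ≤ v ⬝ᵥ (P *ᵥ v) := le_trans (dot_self_nonneg' v) (lower v)
      have key : α * μ * (v ⬝ᵥ (P *ᵥ v)) ≤ α * μ * ((1 + α⁻¹) * (v ⬝ᵥ v)) :=
        mul_le_mul_of_nonneg_left hu (by positivity)
      have h3 : α * μ * ((1 + α⁻¹) * (v ⬝ᵥ v)) = v ⬝ᵥ v := by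
        have hm : μ * (1 + α) = 1 := by rw [hμdef]; exact inv_mul_cancel₀ hα1ne
        field_simp [hμdef]
        linear_combination (v ⬝ᵥ v) * hm
      have h4 : 1 - α * μ = μ := by
        have hm : μ * (1 + α) = 1 := by rw [hμdef]; exact inv_mul_cancel₀ hα1ne
        field_simp [hμdef]
        linear_combination (-1 : ℝ) * hm
      nlinarith [key, h3, h4]
    have iter : ∀ (j : ℕ) (v : Fin n → ℝ),
        ((Fᵀ) ^ j *ᵥ v) ⬝ᵥ (P *ᵥ ((Fᵀ) ^ j *ᵥ v)) ≤ μ ^ j * (v ⬝ᵥ (P *ᵥ v)) := by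
      intro j
      induction j with
      | zero => intro v; simp
      | succ k ih =>
        intro v
        have hpow : (Fᵀ) ^ (k + 1) *ᵥ v = Fᵀ *ᵥ ((Fᵀ) ^ k *ᵥ v) := by
          rw [Matrix.mulVec_mulVec, ← pow_succ']
        rw [hpow]
        calc (Fᵀ *ᵥ ((Fᵀ) ^ k *ᵥ v)) ⬝ᵥ (P *ᵥ (Fᵀ *ᵥ ((Fᵀ) ^ k *ᵥ v)))
            ≤ μ * (((Fᵀ) ^ k *ᵥ v) ⬝ᵥ (P *ᵥ ((Fᵀ) ^ k *ᵥ v))) := mono _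
          _ ≤ μ * (μ ^ k * (v ⬝ᵥ (P *ᵥ v))) :=
              mul_le_mul_of_nonneg_left (ih v) (le_of_lt hμpos)
          _ = μ ^ (k + 1) * (v ⬝ᵥ (P *ᵥ v)) := by ring
    have tbound : ∀ v : Fin n → ℝ,
        ((Fᵀ) ^ i *ᵥ v) ⬝ᵥ ((Fᵀ) ^ i *ᵥ v) ≤ μ ^ i * ((1 + α⁻¹) * (v ⬝ᵥ v)) := by
      intro v
      calc ((Fᵀ) ^ i *ᵥ v) ⬝ᵥ ((Fᵀ) ^ i *ᵥ v)
          ≤ ((Fᵀ) ^ i *ᵥ v) ⬝ᵥ (P *ᵥ ((Fᵀ) ^ i *ᵥ v)) := lower _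
        _ ≤ μ ^ i * (v ⬝ᵥ (P *ᵥ v)) := iter i v
        _ ≤ μ ^ i * ((1 + α⁻¹) * (v ⬝ᵥ v)) :=
            mul_le_mul_of_nonneg_left (upper v) (by positivity)
    have hK : (0 : ℝ) ≤ Real.sqrt (1 + α⁻¹) * (1 / Real.sqrt (1 + α)) ^ i := by positivity
    have hKeq : Real.sqrt (μ ^ i * (1 + α⁻¹)) =
        Real.sqrt (1 + α⁻¹) * (1 / Real.sqrt (1 + α)) ^ i := by
      rw [Real.sqrt_mul (by positivity), real_sqrt_pow' (le_of_lt hμpos), hμdef,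
        Real.sqrt_inv, ← one_div]
      ring
    have vbound : ∀ u : Fin n → ℝ,
        Real.sqrt ((F ^ i *ᵥ u) ⬝ᵥ (F ^ i *ᵥ u)) ≤
          Real.sqrt (1 + α⁻¹) * (1 / Real.sqrt (1 + α)) ^ i * Real.sqrt (u ⬝ᵥ u) := by
      intro u
      set y := F ^ i *ᵥ u with hy
      set w := (Fᵀ) ^ i *ᵥ y with hw
      have hyy : y ⬝ᵥ y = w ⬝ᵥ u := by
        conv_lhs => rw [hy]
        rw [Matrix.dotProduct_mulVec, hw, ← Matrix.mulVec_transpose, Matrix.transpose_pow]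
      have hww : w ⬝ᵥ w ≤ μ ^ i * ((1 + α⁻¹) * (y ⬝ᵥ y)) := tbound y
      have hyynn := dot_self_nonneg' y
      have hsw : Real.sqrt (w ⬝ᵥ w) ≤
          Real.sqrt (μ ^ i * (1 + α⁻¹)) * Real.sqrt (y ⬝ᵥ y) := by
        rw [← Real.sqrt_mul (by positivity)]
        apply Real.sqrt_le_sqrt
        calc w ⬝ᵥ w ≤ μ ^ i * ((1 + α⁻¹) * (y ⬝ᵥ y)) := hww
          _ = μ ^ i * (1 + α⁻¹) * (y ⬝ᵥ y) := by ring
      have hee : Real.sqrt (y ⬝ᵥ y) * Real.sqrt (y ⬝ᵥ y) ≤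
          Real.sqrt (1 + α⁻¹) * (1 / Real.sqrt (1 + α)) ^ i *
            Real.sqrt (u ⬝ᵥ u) * Real.sqrt (y ⬝ᵥ y) := by
        rw [Real.mul_self_sqrt hyynn]
        calc y ⬝ᵥ y = w ⬝ᵥ u := hyy
          _ ≤ Real.sqrt (w ⬝ᵥ w) * Real.sqrt (u ⬝ᵥ u) := dot_le_sqrt_mul_sqrt w u
          _ ≤ Real.sqrt (μ ^ i * (1 + α⁻¹)) * Real.sqrt (y ⬝ᵥ y) * Real.sqrt (u ⬝ᵥ u) :=
              mul_le_mul_of_nonneg_right hsw (Real.sqrt_nonneg _)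
          _ = Real.sqrt (1 + α⁻¹) * (1 / Real.sqrt (1 + α)) ^ i *
                Real.sqrt (u ⬝ᵥ u) * Real.sqrt (y ⬝ᵥ y) := by rw [hKeq]; ring
      rcases eq_or_lt_of_le (Real.sqrt_nonneg (y ⬝ᵥ y)) with h0 | h0
      · rw [← h0]
        positivity
      · exact le_of_mul_le_mul_right (by linarith [hee]) h0
    -- bridge to the operator norm
    rw [opNorm]
    apply ContinuousLinearMap.opNorm_le_bound _ hK
    intro x
    have hfun : (LinearMap.toContinuousLinearMap (Matrix.toEuclideanLin (F ^ i))) x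
        = Matrix.toEuclideanLin (F ^ i) x := by
      simp
    rw [hfun, Matrix.toEuclideanLin_apply, euclid_norm_eq_sqrt_dot,
      euclid_norm_eq_sqrt_dot x]
    simp only [WithLp.equiv_apply, WithLp.equiv_symm_apply, WithLp.ofLp_toLp]
    exact vbound _
end

section
/- Let M ∈ ℝ^{n×n}, α > 0, and let P be a symmetric positive semidefinite matrix satisfying P = M P Mᵀ + I and α Tr(P − I) ≤ 1. Then (1 + α)^i ‖M^i‖² ≤ 1 + α⁻¹ for every i ∈ ℕ. -/
open Matrix

section Aux

variable {n : ℕ}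

lemma lyap_smul_posSemidef {c : ℝ} (hc : 0 ≤ c) {A : Matrix (Fin n) (Fin n) ℝ}
    (hA : A.PosSemidef) : (c • A).PosSemidef := by
  refine Matrix.PosSemidef.of_dotProduct_mulVec_nonneg ?_ fun x => ?_
  · unfold Matrix.IsHermitian
    rw [conjTranspose_smul, hA.1.eq]
    simp
  · rw [smul_mulVec, dotProduct_smul, smul_eq_mul]
    simpa using mul_nonneg hc (hA.dotProduct_mulVec_nonneg x)

lemma lyap_dotProduct_sq_le (u x : Fin n → ℝ) :
    (u ⬝ᵥ x) ^ 2 ≤ (u ⬝ᵥ u) * (x ⬝ᵥ x) := by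
  simpa [dotProduct, sq] using Finset.sum_mul_sq_le_sq_mul_sq Finset.univ u x

lemma lyap_trace_smul_one_sub {Q : Matrix (Fin n) (Fin n) ℝ} (hQ : Q.PosSemidef) :
    (Q.trace • (1 : Matrix (Fin n) (Fin n) ℝ) - Q).PosSemidef := by
  obtain ⟨B, rfl⟩ : ∃ B : Matrix (Fin n) (Fin n) ℝ, Q = Bᴴ * B := by
    open scoped MatrixOrder Matrix.Norms.L2Operator in
    exact CStarAlgebra.nonneg_iff_eq_star_mul_self.mp hQ.nonneg
  refine Matrix.PosSemidef.of_dotProduct_mulVec_nonneg ?_ fun x => ?_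
  · unfold Matrix.IsHermitian
    rw [conjTranspose_sub, conjTranspose_smul, hQ.1.eq, conjTranspose_one]
    simp
  · have hB : Bᴴ = Bᵀ := conjTranspose_eq_transpose_of_trivial B
    have h1 : x ⬝ᵥ ((Bᴴ * B) *ᵥ x) = (B *ᵥ x) ⬝ᵥ (B *ᵥ x) := by
      rw [← mulVec_mulVec, hB, ← vecMul_transpose, dotProduct_mulVec, transpose_transpose,
        dotProduct_comm]
    have h2 : (B *ᵥ x) ⬝ᵥ (B *ᵥ x) ≤ (Bᴴ * B).trace * (x ⬝ᵥ x) := by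
      calc (B *ᵥ x) ⬝ᵥ (B *ᵥ x) = ∑ k, (∑ j, B k j * x j) ^ 2 := by
            simp [dotProduct, mulVec, sq]
        _ ≤ ∑ k, (∑ j, B k j ^ 2) * (∑ j, x j ^ 2) :=
            Finset.sum_le_sum fun k _ => Finset.sum_mul_sq_le_sq_mul_sq _ _ _
        _ = (Bᴴ * B).trace * (x ⬝ᵥ x) := by
            rw [← Finset.sum_mul]
            congr 1
            · rw [Matrix.trace, Finset.sum_comm]
              simp [Matrix.diag, Matrix.mul_apply, hB, sq]
            · simp [dotProduct, sq]
    have h3 : x ⬝ᵥ ((Bᴴ * B).trace • (1 : Matrix (Fin n) (Fin n) ℝ) - Bᴴ * B) *ᵥ x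
        = (Bᴴ * B).trace * (x ⬝ᵥ x) - x ⬝ᵥ ((Bᴴ * B) *ᵥ x) := by
      rw [sub_mulVec, smul_mulVec, one_mulVec, dotProduct_sub, dotProduct_smul, smul_eq_mul]
    simp only [star_trivial]
    rw [h3, h1]
    linarith

lemma lyap_euclid_norm_sq (v : EuclideanSpace ℝ (Fin n)) :
    ‖v‖ ^ 2 = (WithLp.equiv 2 (Fin n → ℝ) v) ⬝ᵥ (WithLp.equiv 2 (Fin n → ℝ) v) := by
  rw [EuclideanSpace.norm_eq, Real.sq_sqrt (Finset.sum_nonneg fun i _ => sq_nonneg _)]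
  simp [dotProduct, Real.norm_eq_abs, sq_abs, sq]

end Aux

/-- If `P ⪰ 0` satisfies `P = M P Mᵀ + I` and `α Tr(P − I) ≤ 1`, then
`(1 + α)^i ‖M^i‖² ≤ 1 + α⁻¹` for every `i`. -/
theorem pow_opNorm_sq_le_of_lyapunov {n : ℕ}
    (M : Matrix (Fin n) (Fin n) ℝ) (α : ℝ) (hα : 0 < α)
    (P : Matrix (Fin n) (Fin n) ℝ) (hP : P.PosSemidef)
    (hLyap : P = M * P * Mᵀ + 1) (hTr : α * (P - 1).trace ≤ 1) :
    ∀ i : ℕ, (1 + α) ^ i * opNorm (M ^ i) ^ 2 ≤ 1 + α⁻¹ := by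
  intro i
  set c : ℝ := 1 + α with hc
  have hc0 : 0 < c := by positivity
  have hMt : Mᴴ = Mᵀ := conjTranspose_eq_transpose_of_trivial M
  have hsub : P - 1 = M * P * Mᵀ := by
    nth_rewrite 1 [hLyap]; rw [add_sub_cancel_right]
  have hPI : (P - 1).PosSemidef := by
    rw [hsub]
    simpa [hMt] using hP.mul_mul_conjTranspose_same M
  set t : ℝ := (P - 1).trace with htdef
  have h1t : 0 ≤ 1 - α * t := by linarith
  have htinv : t ≤ α⁻¹ := by
    rw [← mul_le_mul_iff_right₀ hα, mul_inv_cancel₀ hα.ne']; exact hTr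
  have hPub : ((1 + α⁻¹) • (1 : Matrix (Fin n) (Fin n) ℝ) - P).PosSemidef := by
    have hid : (1 + α⁻¹) • (1 : Matrix (Fin n) (Fin n) ℝ) - P
        = (α⁻¹ - t) • 1 + (t • 1 - (P - 1)) := by module
    rw [hid]
    exact (lyap_smul_posSemidef (by linarith) Matrix.PosSemidef.one).add
      (lyap_trace_smul_one_sub hPI)
  have hkey : (P - c • (M * P * Mᵀ)).PosSemidef := by
    have hid : P - c • (M * P * Mᵀ) = (1 - α * t) • 1 + α • (t • 1 - (P - 1)) := by
      rw [← hsub, hc]; module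
    rw [hid]
    exact (lyap_smul_posSemidef h1t Matrix.PosSemidef.one).add
      (lyap_smul_posSemidef hα.le (lyap_trace_smul_one_sub hPI))
  have hiter : ∀ j : ℕ, (P - c ^ j • (M ^ j * P * (M ^ j)ᵀ)).PosSemidef := by
    intro j
    induction j with
    | zero => simpa using Matrix.PosSemidef.zero
    | succ j ih =>
      have h1 : (M * (P - c ^ j • (M ^ j * P * (M ^ j)ᵀ)) * Mᵀ).PosSemidef := by
        simpa [hMt] using ih.mul_mul_conjTranspose_same M
      have e1 : M ^ (j + 1) * P * (M ^ (j + 1))ᵀ = M * (M ^ j * P * (M ^ j)ᵀ) * Mᵀ := by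
        rw [pow_succ' M j, transpose_mul]
        simp [mul_assoc]
      have e2 : M * (P - c ^ j • (M ^ j * P * (M ^ j)ᵀ)) * Mᵀ
          = M * P * Mᵀ - c ^ j • (M ^ (j + 1) * P * (M ^ (j + 1))ᵀ) := by
        rw [mul_sub, sub_mul, mul_smul_comm, smul_mul_assoc, ← e1]
      have hid : P - c ^ (j + 1) • (M ^ (j + 1) * P * (M ^ (j + 1))ᵀ)
          = (P - c • (M * P * Mᵀ)) + c • (M * (P - c ^ j • (M ^ j * P * (M ^ j)ᵀ)) * Mᵀ) := by
        rw [e2, pow_succ]; module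
      rw [hid]
      exact hkey.add (lyap_smul_posSemidef hc0.le h1)
  set A : Matrix (Fin n) (Fin n) ℝ := M ^ i with hA
  have hAP : (A * (P - 1) * Aᵀ).PosSemidef := by
    simpa [conjTranspose_eq_transpose_of_trivial] using hPI.mul_mul_conjTranspose_same A
  have hsum : ((1 + α⁻¹) • (1 : Matrix (Fin n) (Fin n) ℝ) - c ^ i • (A * Aᵀ)).PosSemidef := by
    have e3 : A * (P - 1) * Aᵀ = A * P * Aᵀ - A * Aᵀ := by
      rw [mul_sub, sub_mul, mul_one]
    have hid : (1 + α⁻¹) • (1 : Matrix (Fin n) (Fin n) ℝ) - c ^ i • (A * Aᵀ)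
        = (((1 + α⁻¹) • 1 - P) + (P - c ^ i • (A * P * Aᵀ))) + c ^ i • (A * (P - 1) * Aᵀ) := by
      rw [e3]; module
    rw [hid]
    exact (hPub.add (hiter i)).add (lyap_smul_posSemidef (pow_nonneg hc0.le i) hAP)
  have hquad : ∀ y : Fin n → ℝ,
      c ^ i * ((Aᵀ *ᵥ y) ⬝ᵥ (Aᵀ *ᵥ y)) ≤ (1 + α⁻¹) * (y ⬝ᵥ y) := by
    intro y
    have h := hsum.dotProduct_mulVec_nonneg y
    have e : y ⬝ᵥ ((A * Aᵀ) *ᵥ y) = (Aᵀ *ᵥ y) ⬝ᵥ (Aᵀ *ᵥ y) := by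
      rw [← mulVec_mulVec, dotProduct_mulVec]
      congr 1
      rw [← transpose_transpose A, vecMul_transpose, transpose_transpose]
    simp only [star_trivial, sub_mulVec, smul_mulVec, one_mulVec, dotProduct_sub,
      dotProduct_smul, smul_eq_mul, e] at h
    linarith
  have hdotnn : ∀ y : Fin n → ℝ, 0 ≤ y ⬝ᵥ y := fun y =>
    Finset.sum_nonneg fun k _ => mul_self_nonneg _
  have hvec : ∀ x : Fin n → ℝ,
      c ^ i * ((A *ᵥ x) ⬝ᵥ (A *ᵥ x)) ≤ (1 + α⁻¹) * (x ⬝ᵥ x) := by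
    intro x
    set z : Fin n → ℝ := A *ᵥ x with hz
    set u : Fin n → ℝ := Aᵀ *ᵥ z with hu
    have hzz : z ⬝ᵥ z = u ⬝ᵥ x := by
      nth_rewrite 2 [hz]
      rw [hu, dotProduct_mulVec]
      congr 1
      rw [← transpose_transpose A, vecMul_transpose, transpose_transpose]
    have hcs := lyap_dotProduct_sq_le u x
    have hq := hquad z
    have hzn := hdotnn z
    have hxn := hdotnn x
    have hun := hdotnn u
    have hcip : (0:ℝ) < c ^ i := pow_pos hc0 i
    rcases eq_or_lt_of_le hzn with hz0 | hz0
    · rw [← hz0]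
      have : (0:ℝ) < 1 + α⁻¹ := by positivity
      nlinarith
    · have h1 : c ^ i * ((z ⬝ᵥ z) ^ 2) ≤ c ^ i * ((u ⬝ᵥ u) * (x ⬝ᵥ x)) := by
        rw [hzz]; exact mul_le_mul_of_nonneg_left hcs hcip.le
      have h2 : c ^ i * (u ⬝ᵥ u) * (x ⬝ᵥ x) ≤ (1 + α⁻¹) * (z ⬝ᵥ z) * (x ⬝ᵥ x) :=
        mul_le_mul_of_nonneg_right hq hxn
      have h3 : c ^ i * ((z ⬝ᵥ z) ^ 2) ≤ (1 + α⁻¹) * (z ⬝ᵥ z) * (x ⬝ᵥ x) := by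
        nlinarith
      have := mul_le_mul_of_nonneg_right h3 (le_of_lt (inv_pos.mpr hz0))
      calc c ^ i * (z ⬝ᵥ z) = c ^ i * ((z ⬝ᵥ z) ^ 2) * (z ⬝ᵥ z)⁻¹ := by
            field_simp
        _ ≤ (1 + α⁻¹) * (z ⬝ᵥ z) * (x ⬝ᵥ x) * (z ⬝ᵥ z)⁻¹ := this
        _ = (1 + α⁻¹) * (x ⬝ᵥ x) := by field_simp
  set K : ℝ := (c ^ i)⁻¹ * (1 + α⁻¹) with hKdef
  have hK0 : 0 ≤ K := by positivity
  have hbound : ∀ v : EuclideanSpace ℝ (Fin n),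
      ‖(Matrix.toEuclideanLin A) v‖ ≤ Real.sqrt K * ‖v‖ := by
    intro v
    have hx := hvec ((WithLp.equiv 2 (Fin n → ℝ)) v)
    have hcip : (0:ℝ) < c ^ i := pow_pos hc0 i
    have hnv : ‖(Matrix.toEuclideanLin A) v‖ ^ 2 ≤ K * ‖v‖ ^ 2 := by
      rw [lyap_euclid_norm_sq, lyap_euclid_norm_sq, (show WithLp.equiv 2 (Fin n → ℝ) (Matrix.toEuclideanLin A v)
          = A *ᵥ WithLp.equiv 2 (Fin n → ℝ) v from rfl),
        hKdef]
      rw [inv_mul_eq_div, div_mul_eq_mul_div, le_div_iff₀ hcip]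
      linarith [hx]
    calc ‖(Matrix.toEuclideanLin A) v‖
        = Real.sqrt (‖(Matrix.toEuclideanLin A) v‖ ^ 2) := (Real.sqrt_sq (norm_nonneg _)).symm
      _ ≤ Real.sqrt (K * ‖v‖ ^ 2) := Real.sqrt_le_sqrt hnv
      _ = Real.sqrt K * ‖v‖ := by rw [Real.sqrt_mul hK0, Real.sqrt_sq (norm_nonneg _)]
  have hop : opNorm A ≤ Real.sqrt K := by
    apply ContinuousLinearMap.opNorm_le_bound _ (Real.sqrt_nonneg K)
    intro v
    simpa using hbound v
  have hopnn : 0 ≤ opNorm A := norm_nonneg _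
  have hop2 : opNorm A ^ 2 ≤ K := by
    calc opNorm A ^ 2 ≤ Real.sqrt K ^ 2 := pow_le_pow_left₀ hopnn hop 2
      _ = K := Real.sq_sqrt hK0
  have hfin := mul_le_mul_of_nonneg_left hop2 (pow_pos hc0 i).le
  have hck : c ^ i * K = 1 + α⁻¹ := by
    rw [hKdef, ← mul_assoc, mul_inv_cancel₀ (pow_pos hc0 i).ne', one_mul]
  rw [hck] at hfin
  exact hfin
end

section
/- Let 𝓛 ⊆ ℝ^{n×q} satisfy the uniform stability condition with constants γ > 0 and λ ∈ (0,1), and suppose C has full row rank q. Then: (i) ‖LC‖ ≤ ‖A‖ + γ for every L ∈ 𝓛, and 𝓛 is bounded; (ii) every L in the closure of 𝓛 also satisfies ‖(A − LC)^i‖ ≤ γλ^i for all i ∈ ℕ; consequently the closure of 𝓛 is compact. -/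
open Matrix

attribute [local instance] Matrix.frobeniusNormedAddCommGroup Matrix.frobeniusNormedSpace

noncomputable def eMat {a b : ℕ} : Matrix (Fin a) (Fin b) ℝ ≃ₗ[ℝ] (EuclideanSpace ℝ (Fin b) →L[ℝ] EuclideanSpace ℝ (Fin a)) :=
  Matrix.toEuclideanLin.trans LinearMap.toContinuousLinearMap

lemma opNorm_eq {a b : ℕ} (M : Matrix (Fin a) (Fin b) ℝ) : opNorm M = ‖eMat M‖ := rfl

lemma opNorm_nonneg {a b : ℕ} (M : Matrix (Fin a) (Fin b) ℝ) : 0 ≤ opNorm M := by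
  rw [opNorm_eq]; exact norm_nonneg _

lemma eMat_mul {a b c : ℕ} (M : Matrix (Fin a) (Fin b) ℝ) (N : Matrix (Fin b) (Fin c) ℝ) :
    eMat (M * N) = (eMat M).comp (eMat N) := by
  ext x i
  rw [eMat]
  simp only [LinearEquiv.trans_apply, Matrix.toEuclideanLin_eq_toLin,
    Matrix.toLin_mul (PiLp.basisFun 2 ℝ (Fin c)) (PiLp.basisFun 2 ℝ (Fin b)) (PiLp.basisFun 2 ℝ (Fin a))]
  simp [eMat, Matrix.toEuclideanLin_eq_toLin]

lemma eMat_one {a : ℕ} : eMat (1 : Matrix (Fin a) (Fin a) ℝ) = 1 := by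
  ext x i
  simp [eMat, Matrix.toEuclideanLin_eq_toLin]

lemma eMat_pow {a : ℕ} (M : Matrix (Fin a) (Fin a) ℝ) (i : ℕ) :
    eMat (M ^ i) = (eMat M) ^ i := by
  induction i with
  | zero => simpa using eMat_one
  | succ k ih => rw [pow_succ, pow_succ, eMat_mul, ih]; rfl

lemma opNorm_mul_le {a b c : ℕ} (M : Matrix (Fin a) (Fin b) ℝ) (N : Matrix (Fin b) (Fin c) ℝ) :
    opNorm (M * N) ≤ opNorm M * opNorm N := by
  rw [opNorm_eq, opNorm_eq, opNorm_eq, eMat_mul]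
  exact ContinuousLinearMap.opNorm_comp_le _ _

lemma exists_right_inverse {n q : ℕ} (C : Matrix (Fin q) (Fin n) ℝ) (hC : C.rank = q) :
    ∃ B : Matrix (Fin n) (Fin q) ℝ, C * B = 1 := by
  have h1 : LinearMap.range C.mulVecLin = ⊤ := by
    apply Submodule.eq_top_of_finrank_eq
    rw [← Matrix.rank, hC]
    simp
  obtain ⟨g, hg⟩ := C.mulVecLin.exists_rightInverse_of_surjective h1
  refine ⟨Matrix.toLin'.symm g, ?_⟩
  apply Matrix.toLin'.injective
  rw [Matrix.toLin'_mul, Matrix.toLin'_one]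
  have : Matrix.toLin' C = C.mulVecLin := rfl
  rw [this, Matrix.toLin'.apply_symm_apply, hg]


/-- If `𝓛` satisfies the uniform stability condition and `C` has full row rank, then
(i) `‖LC‖ ≤ ‖A‖ + γ` on `𝓛` and `𝓛` is bounded; (ii) the stability bound extends to the
closure of `𝓛`, and the closure of `𝓛` is compact. -/
theorem uniform_stability_closure_compact {n q : ℕ}
    (A : Matrix (Fin n) (Fin n) ℝ) (C : Matrix (Fin q) (Fin n) ℝ)
    (𝓛 : Set (Matrix (Fin n) (Fin q) ℝ))
    (γ lam : ℝ) (hγ : 0 < γ) (hlam : lam ∈ Set.Ioo (0 : ℝ) 1)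
    (hstab : ∀ L ∈ 𝓛, ∀ i : ℕ, opNorm ((A - L * C) ^ i) ≤ γ * lam ^ i)
    (hC : C.rank = q) :
    (∀ L ∈ 𝓛, opNorm (L * C) ≤ opNorm A + γ) ∧
    Bornology.IsBounded 𝓛 ∧
    (∀ L ∈ closure 𝓛, ∀ i : ℕ, opNorm ((A - L * C) ^ i) ≤ γ * lam ^ i) ∧
    IsCompact (closure 𝓛) := by
  obtain ⟨B, hB⟩ := exists_right_inverse C hC
  -- (i)
  have hi : ∀ L ∈ 𝓛, opNorm (L * C) ≤ opNorm A + γ := by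
    intro L hL
    have h1 := hstab L hL 1
    rw [pow_one, pow_one] at h1
    have hlam1 : γ * lam ≤ γ := by nlinarith [hlam.1, hlam.2]
    have h2 : opNorm (A - L * C) ≤ γ := le_trans h1 hlam1
    have h3 : opNorm (L * C) ≤ opNorm A + opNorm (A - L * C) := by
      rw [opNorm_eq, opNorm_eq, opNorm_eq]
      have h4 : eMat (L * C) = eMat A - eMat (A - L * C) := by
        rw [← map_sub, sub_sub_cancel]
      rw [h4]
      exact norm_sub_le _ _
    linarith
  -- boundedness
  let e : Matrix (Fin n) (Fin q) ℝ ≃L[ℝ] _ := (eMat (a := n) (b := q)).toContinuousLinearEquiv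
  let es := e.symm.toContinuousLinearMap
  obtain ⟨K, hKpos, hKb⟩ := (ContinuousLinearMap.isBoundedLinearMap es).bound
  have key : ∀ M : Matrix (Fin n) (Fin q) ℝ, ‖M‖ ≤ K * opNorm M := by
    intro M
    have h0 : M = es (e M) := (e.symm_apply_apply M).symm
    calc ‖M‖ = ‖es (e M)‖ := by rw [← h0]
      _ ≤ K * ‖e M‖ := hKb _
      _ = K * opNorm M := by rw [opNorm_eq, show (e M : EuclideanSpace ℝ (Fin q) →L[ℝ] EuclideanSpace ℝ (Fin n)) = eMat M from rfl]
  have hK0 : 0 ≤ K := hKpos.le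
  have hsub : 𝓛 ⊆ Metric.closedBall 0 (K * ((opNorm A + γ) * opNorm B)) := by
    intro L hL
    rw [Metric.mem_closedBall, dist_zero_right]
    have hLeq : L = (L * C) * B := by rw [Matrix.mul_assoc, hB, Matrix.mul_one]
    have h5 : opNorm L ≤ opNorm (L * C) * opNorm B := by
      conv_lhs => rw [hLeq]
      exact opNorm_mul_le _ _
    have h6 : opNorm (L * C) * opNorm B ≤ (opNorm A + γ) * opNorm B :=
      mul_le_mul_of_nonneg_right (hi L hL) (opNorm_nonneg B)
    calc ‖L‖ ≤ K * opNorm L := key L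
      _ ≤ K * ((opNorm A + γ) * opNorm B) :=
        mul_le_mul_of_nonneg_left (le_trans h5 h6) hK0
  have hbdd : Bornology.IsBounded 𝓛 := Metric.isBounded_closedBall.subset hsub
  -- closure
  let ψ : Matrix (Fin n) (Fin q) ℝ →ₗ[ℝ] Matrix (Fin n) (Fin n) ℝ :=
    { toFun := fun L => L * C
      map_add' := fun x y => Matrix.add_mul x y C
      map_smul' := fun r x => Matrix.smul_mul r x C }
  have hψ : Continuous ψ := ψ.continuous_of_finiteDimensional
  let e2 : Matrix (Fin n) (Fin n) ℝ ≃L[ℝ] _ := (eMat (a := n) (b := n)).toContinuousLinearEquiv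
  have hclosed : ∀ i : ℕ, IsClosed {L : Matrix (Fin n) (Fin q) ℝ |
      opNorm ((A - L * C) ^ i) ≤ γ * lam ^ i} := by
    intro i
    have heq : (fun L : Matrix (Fin n) (Fin q) ℝ => opNorm ((A - L * C) ^ i)) =
        fun L => ‖(e2 (A - ψ L)) ^ i‖ := by
      funext L
      rw [opNorm_eq, eMat_pow]
      congr 2
    have hcont : Continuous fun L : Matrix (Fin n) (Fin q) ℝ => opNorm ((A - L * C) ^ i) := by
      rw [heq]
      exact continuous_norm.comp ((continuous_pow i).comp
        (e2.continuous.comp (continuous_const.sub hψ)))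
    exact isClosed_le hcont continuous_const
  have hclosure : ∀ L ∈ closure 𝓛, ∀ i : ℕ, opNorm ((A - L * C) ^ i) ≤ γ * lam ^ i := by
    intro L hL i
    exact closure_minimal (fun L' hL' => hstab L' hL' i) (hclosed i) hL
  exact ⟨hi, hbdd, hclosure,
    Metric.isCompact_of_isClosed_isBounded isClosed_closure hbdd.closure⟩
end

section
/- Suppose the innovations e_k satisfy the noise assumptions. Then for every L ∈ ℝ^{n×q} and N ≥ 1, E[V_N(L)] = Tr(S* W) + (1/N) ∑_{k=1}^N E[ ‖C z_k(L)‖²_W ]. In particular E[V_N(L)] ≥ Tr(S* W) for all L, with equality when L = L*. -/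
open Matrix MeasureTheory

/-- The prediction-error process `z_0(L) = 0`, `z_{k+1}(L) = (A − LC) z_k(L) + (L − L*) e_k`. -/
noncomputable def zproc {n q : ℕ} {Ω : Type*} (A : Matrix (Fin n) (Fin n) ℝ)
    (C : Matrix (Fin q) (Fin n) ℝ) (Lstar : Matrix (Fin n) (Fin q) ℝ)
    (e : ℕ → Ω → Fin q → ℝ) (L : Matrix (Fin n) (Fin q) ℝ) : ℕ → Ω → Fin n → ℝ
  | 0 => 0
  | (k + 1) => fun ω =>
      (A - L * C).mulVec (zproc A C Lstar e L k ω) + (L - Lstar).mulVec (e k ω)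

/-- The PEM objective `V_N(L) = (1/N) ∑_{k=1}^N ‖e_k − C z_k(L)‖²_W`. -/
noncomputable def VN {n q : ℕ} {Ω : Type*} (A : Matrix (Fin n) (Fin n) ℝ)
    (C : Matrix (Fin q) (Fin n) ℝ) (Lstar : Matrix (Fin n) (Fin q) ℝ)
    (W : Matrix (Fin q) (Fin q) ℝ) (e : ℕ → Ω → Fin q → ℝ) (N : ℕ)
    (L : Matrix (Fin n) (Fin q) ℝ) (ω : Ω) : ℝ :=
  (1 / (N : ℝ)) * ∑ k ∈ Finset.Icc 1 N,
    (e k ω - C.mulVec (zproc A C Lstar e L k ω)) ⬝ᵥ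
      W.mulVec (e k ω - C.mulVec (zproc A C Lstar e L k ω))

/-- **Expected value of the PEM objective.** Under the noise assumptions,
`E[V_N(L)] = Tr(S* W) + (1/N) ∑ E[‖C z_k(L)‖²_W]`; in particular
`E[V_N(L)] ≥ Tr(S* W)` with equality at `L = L*`. -/
theorem expected_value_of_PEM_objective {n q : ℕ}
    (A : Matrix (Fin n) (Fin n) ℝ) (C : Matrix (Fin q) (Fin n) ℝ)
    (Lstar : Matrix (Fin n) (Fin q) ℝ) (Sstar W : Matrix (Fin q) (Fin q) ℝ)
    (hS : Sstar.PosDef) (hW : W.PosDef)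
    {Ω : Type*} [MeasurableSpace Ω] (P : Measure Ω) [IsProbabilityMeasure P]
    (e : ℕ → Ω → Fin q → ℝ) (c : ℝ)
    (hmeas : ∀ k, Measurable (e k))
    (hindep : ProbabilityTheory.iIndepFun e P)
    (hmean : ∀ k, ∀ i, ∫ ω, e k ω i ∂P = 0)
    (hcov : ∀ k, ∀ i j, ∫ ω, e k ω i * e k ω j ∂P = Sstar i j)
    (hmom4 : ∀ k, ∫⁻ ω, ENNReal.ofReal ((∑ i, (e k ω i) ^ 2) ^ 2) ∂P ≤ ENNReal.ofReal c) :
    (∀ L : Matrix (Fin n) (Fin q) ℝ, ∀ N : ℕ, 1 ≤ N →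
      ∫ ω, VN A C Lstar W e N L ω ∂P
        = (Sstar * W).trace + (1 / (N : ℝ)) * ∑ k ∈ Finset.Icc 1 N,
            ∫ ω, (C.mulVec (zproc A C Lstar e L k ω)) ⬝ᵥ
              W.mulVec (C.mulVec (zproc A C Lstar e L k ω)) ∂P) ∧
    (∀ L : Matrix (Fin n) (Fin q) ℝ, ∀ N : ℕ, 1 ≤ N →
      (Sstar * W).trace ≤ ∫ ω, VN A C Lstar W e N L ω ∂P) ∧
    (∀ N : ℕ, 1 ≤ N → ∫ ω, VN A C Lstar W e N Lstar ω ∂P = (Sstar * W).trace) := by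
  classical
  have hemeas : ∀ k i, Measurable (fun ω => e k ω i) :=
    fun k i => (measurable_pi_apply i).comp (hmeas k)
  -- square of sum of squares is integrable
  have hg2 : ∀ k, Integrable (fun ω => (∑ i, (e k ω i) ^ 2) ^ 2) P := by
    intro k
    refine ⟨Measurable.aestronglyMeasurable (by measurability), ?_⟩
    rw [hasFiniteIntegral_def]
    calc ∫⁻ ω, (‖(∑ i, (e k ω i) ^ 2) ^ 2‖₊ : ENNReal) ∂P
        = ∫⁻ ω, ENNReal.ofReal ((∑ i, (e k ω i) ^ 2) ^ 2) ∂P := by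
          refine lintegral_congr fun ω => ?_
          exact Real.enorm_eq_ofReal (by positivity)
      _ ≤ ENNReal.ofReal c := hmom4 k
      _ < ⊤ := ENNReal.ofReal_lt_top
  -- components are in L²
  have he2 : ∀ k i, MemLp (fun ω => e k ω i) 2 P := by
    intro k i
    rw [memLp_two_iff_integrable_sq (hemeas k i).aestronglyMeasurable]
    refine Integrable.mono' ((hg2 k).add (integrable_const 1))
      ((hemeas k i).pow_const 2).aestronglyMeasurable ?_
    filter_upwards with ω
    simp only [Pi.add_apply]
    have h1 : (e k ω i) ^ 2 ≤ ∑ j, (e k ω j) ^ 2 :=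
      Finset.single_le_sum (f := fun j => (e k ω j) ^ 2) (fun j _ => sq_nonneg _)
        (Finset.mem_univ i)
    have h2 : (∑ j, (e k ω j) ^ 2) ≤ (∑ j, (e k ω j) ^ 2) ^ 2 + 1 := by
      nlinarith [sq_nonneg ((∑ j, (e k ω j) ^ 2) - 1)]
    rw [Real.norm_eq_abs, abs_of_nonneg (sq_nonneg _)]
    linarith
  have he1 : ∀ k i, Integrable (fun ω => e k ω i) P :=
    fun k i => (he2 k i).integrable one_le_two
  -- products of components are integrable
  have hprod : ∀ a i b j, Integrable (fun ω => e a ω i * e b ω j) P := by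
    intro a i b j
    refine Integrable.mono' ((he2 a i).integrable_sq.add (he2 b j).integrable_sq)
      ((hemeas a i).mul (hemeas b j)).aestronglyMeasurable ?_
    filter_upwards with ω
    simp only [Pi.add_apply]
    rw [Real.norm_eq_abs, abs_mul]
    nlinarith [sq_nonneg (|e a ω i| - |e b ω j|), sq_abs (e a ω i), sq_abs (e b ω j),
      abs_nonneg (e a ω i), abs_nonneg (e b ω j)]
  -- cross expectations vanish
  have hcross : ∀ a i b j, a ≠ b → ∫ ω, e a ω i * e b ω j ∂P = 0 := by
    intro a i b j hab
    have hind : ProbabilityTheory.IndepFun (fun ω => e a ω i) (fun ω => e b ω j) P :=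
      (hindep.indepFun hab).comp (measurable_pi_apply i) (measurable_pi_apply j)
    have h : ∫ ω, e a ω i * e b ω j ∂P = (∫ ω, e a ω i ∂P) * ∫ ω, e b ω j ∂P :=
      ProbabilityTheory.IndepFun.integral_fun_mul_eq_mul_integral hind (he1 a i).aestronglyMeasurable
        (he1 b j).aestronglyMeasurable
    rw [h, hmean a i, zero_mul]
  -- representation of the state process
  have hz : ∀ L k ω, zproc A C Lstar e L k ω
      = ∑ m ∈ Finset.range k, ((A - L * C) ^ (k - 1 - m) * (L - Lstar)).mulVec (e m ω) := by
    intro L k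
    induction k with
    | zero => intro ω; simp [zproc]
    | succ k ih =>
      intro ω
      show (A - L * C).mulVec (zproc A C Lstar e L k ω) + (L - Lstar).mulVec (e k ω) = _
      rw [ih, Finset.sum_range_succ]
      have hsum : (A - L * C).mulVec
          (∑ m ∈ Finset.range k, ((A - L * C) ^ (k - 1 - m) * (L - Lstar)).mulVec (e m ω))
          = ∑ m ∈ Finset.range k,
            ((A - L * C) ^ (k + 1 - 1 - m) * (L - Lstar)).mulVec (e m ω) := by
        rw [← Matrix.mulVecLin_apply, map_sum]
        refine Finset.sum_congr rfl fun m hm => ?_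
        have hm' := Finset.mem_range.mp hm
        rw [Matrix.mulVecLin_apply, Matrix.mulVec_mulVec, ← Matrix.mul_assoc, ← pow_succ',
          show k - 1 - m + 1 = k + 1 - 1 - m from by omega]
      rw [hsum]
      congr 1
      simp
  -- component formula for C z_k
  have hy : ∀ L k ω j, C.mulVec (zproc A C Lstar e L k ω) j
      = ∑ m ∈ Finset.range k, ∑ l,
          (C * ((A - L * C) ^ (k - 1 - m) * (L - Lstar))) j l * e m ω l := by
    intro L k ω j
    rw [hz L k ω, ← Matrix.mulVecLin_apply, map_sum]
    rw [Finset.sum_apply]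
    refine Finset.sum_congr rfl fun m hm => ?_
    rw [Matrix.mulVecLin_apply, Matrix.mulVec_mulVec]
    rfl
  -- e k i * (C z_k) j : integrable and mean zero
  have hey : ∀ L k (i j : Fin q),
      Integrable (fun ω => e k ω i * C.mulVec (zproc A C Lstar e L k ω) j) P ∧
      ∫ ω, e k ω i * C.mulVec (zproc A C Lstar e L k ω) j ∂P = 0 := by
    intro L k i j
    have hrep : (fun ω => e k ω i * C.mulVec (zproc A C Lstar e L k ω) j)
        = fun ω => ∑ m ∈ Finset.range k, ∑ l,
            (C * ((A - L * C) ^ (k - 1 - m) * (L - Lstar))) j l * (e k ω i * e m ω l) := by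
      funext ω
      rw [hy L k ω j, Finset.mul_sum]
      exact Finset.sum_congr rfl fun m _ => by
        rw [Finset.mul_sum]; exact Finset.sum_congr rfl fun l _ => by ring
    have hint : ∀ m ∈ Finset.range k, ∀ l : Fin q,
        Integrable (fun ω => (C * ((A - L * C) ^ (k - 1 - m) * (L - Lstar))) j l
          * (e k ω i * e m ω l)) P :=
      fun m _ l => (hprod k i m l).const_mul _
    constructor
    · rw [hrep]
      exact integrable_finset_sum _ fun m hm =>
        integrable_finset_sum _ fun l _ => hint m hm l
    · rw [hrep, integral_finset_sum _ fun m hm =>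
        integrable_finset_sum _ fun l _ => hint m hm l]
      refine Finset.sum_eq_zero fun m hm => ?_
      rw [integral_finset_sum _ fun l _ => hint m hm l]
      refine Finset.sum_eq_zero fun l _ => ?_
      rw [integral_const_mul, hcross k i m l (Finset.mem_range.mp hm).ne', mul_zero]
  -- (C z_k) i * (C z_k) j : integrable
  have hyy : ∀ L k (i j : Fin q),
      Integrable (fun ω => C.mulVec (zproc A C Lstar e L k ω) i
        * C.mulVec (zproc A C Lstar e L k ω) j) P := by
    intro L k i j
    have hrep : (fun ω => C.mulVec (zproc A C Lstar e L k ω) i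
          * C.mulVec (zproc A C Lstar e L k ω) j)
        = fun ω => ∑ m ∈ Finset.range k, ∑ l, ∑ m' ∈ Finset.range k, ∑ l',
            (C * ((A - L * C) ^ (k - 1 - m) * (L - Lstar))) i l
            * (C * ((A - L * C) ^ (k - 1 - m') * (L - Lstar))) j l'
            * (e m ω l * e m' ω l') := by
      funext ω
      rw [hy L k ω i, hy L k ω j, Finset.sum_mul]
      refine Finset.sum_congr rfl fun m _ => ?_
      rw [Finset.sum_mul]
      refine Finset.sum_congr rfl fun l _ => ?_
      rw [Finset.mul_sum]
      refine Finset.sum_congr rfl fun m' _ => ?_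
      rw [Finset.mul_sum]
      exact Finset.sum_congr rfl fun l' _ => by ring
    rw [hrep]
    exact integrable_finset_sum _ fun m _ => integrable_finset_sum _ fun l _ =>
      integrable_finset_sum _ fun m' _ => integrable_finset_sum _ fun l' _ =>
        (hprod m l m' l').const_mul _
  -- expansion of the quadratic form
  have hexp : ∀ u : Fin q → ℝ, u ⬝ᵥ W.mulVec u = ∑ i, ∑ j, W i j * (u i * u j) := by
    intro u
    simp only [dotProduct, Matrix.mulVec, Finset.mul_sum]
    exact Finset.sum_congr rfl fun i _ => Finset.sum_congr rfl fun j _ => by ring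
  have hWsym : ∀ a b, W a b = W b a := by
    intro a b
    have := hW.isHermitian.apply b a
    simpa using this
  -- per-term integrability of the full quadratic
  have hterm : ∀ L k (i j : Fin q), Integrable (fun ω =>
      (e k ω i - C.mulVec (zproc A C Lstar e L k ω) i)
        * (e k ω j - C.mulVec (zproc A C Lstar e L k ω) j)) P := by
    intro L k i j
    have h3 : Integrable (fun ω => C.mulVec (zproc A C Lstar e L k ω) i * e k ω j) P := by
      have heq : (fun ω => C.mulVec (zproc A C Lstar e L k ω) i * e k ω j)
          = fun ω => e k ω j * C.mulVec (zproc A C Lstar e L k ω) i :=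
        funext fun ω => mul_comm _ _
      rw [heq]; exact (hey L k j i).1
    have heq : (fun ω => (e k ω i - C.mulVec (zproc A C Lstar e L k ω) i)
          * (e k ω j - C.mulVec (zproc A C Lstar e L k ω) j))
        = fun ω => e k ω i * e k ω j - e k ω i * C.mulVec (zproc A C Lstar e L k ω) j
            - C.mulVec (zproc A C Lstar e L k ω) i * e k ω j
            + C.mulVec (zproc A C Lstar e L k ω) i * C.mulVec (zproc A C Lstar e L k ω) j :=
      funext fun ω => by ring
    rw [heq]
    exact (((hprod k i k j).sub (hey L k i j).1).sub h3).add (hyy L k i j)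
  -- integrability of the full quadratic form and of the z-quadratic
  have hQint : ∀ L k, Integrable (fun ω =>
      (e k ω - C.mulVec (zproc A C Lstar e L k ω)) ⬝ᵥ
        W.mulVec (e k ω - C.mulVec (zproc A C Lstar e L k ω))) P := by
    intro L k
    have heq : (fun ω => (e k ω - C.mulVec (zproc A C Lstar e L k ω)) ⬝ᵥ
          W.mulVec (e k ω - C.mulVec (zproc A C Lstar e L k ω)))
        = fun ω => ∑ i, ∑ j, W i j *
            ((e k ω i - C.mulVec (zproc A C Lstar e L k ω) i)
              * (e k ω j - C.mulVec (zproc A C Lstar e L k ω) j)) := by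
      funext ω
      rw [hexp]
      exact Finset.sum_congr rfl fun i _ => Finset.sum_congr rfl fun j _ => by
        simp [Pi.sub_apply]
    rw [heq]
    exact integrable_finset_sum _ fun i _ => integrable_finset_sum _ fun j _ =>
      (hterm L k i j).const_mul _
  -- the key per-step identity
  have hkey : ∀ L k,
      ∫ ω, (e k ω - C.mulVec (zproc A C Lstar e L k ω)) ⬝ᵥ
          W.mulVec (e k ω - C.mulVec (zproc A C Lstar e L k ω)) ∂P
      = (Sstar * W).trace
        + ∫ ω, (C.mulVec (zproc A C Lstar e L k ω)) ⬝ᵥ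
            W.mulVec (C.mulVec (zproc A C Lstar e L k ω)) ∂P := by
    intro L k
    have heq : (fun ω => (e k ω - C.mulVec (zproc A C Lstar e L k ω)) ⬝ᵥ
          W.mulVec (e k ω - C.mulVec (zproc A C Lstar e L k ω)))
        = fun ω => ∑ i, ∑ j, W i j *
            ((e k ω i - C.mulVec (zproc A C Lstar e L k ω) i)
              * (e k ω j - C.mulVec (zproc A C Lstar e L k ω) j)) := by
      funext ω
      rw [hexp]
      exact Finset.sum_congr rfl fun i _ => Finset.sum_congr rfl fun j _ => by
        simp [Pi.sub_apply]
    have heq2 : (fun ω => (C.mulVec (zproc A C Lstar e L k ω)) ⬝ᵥ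
          W.mulVec (C.mulVec (zproc A C Lstar e L k ω)))
        = fun ω => ∑ i, ∑ j, W i j *
            (C.mulVec (zproc A C Lstar e L k ω) i * C.mulVec (zproc A C Lstar e L k ω) j) :=
      funext fun ω => hexp _
    have hsplit : ∀ i j : Fin q,
        ∫ ω, (e k ω i - C.mulVec (zproc A C Lstar e L k ω) i)
          * (e k ω j - C.mulVec (zproc A C Lstar e L k ω) j) ∂P
        = Sstar i j + ∫ ω, C.mulVec (zproc A C Lstar e L k ω) i
            * C.mulVec (zproc A C Lstar e L k ω) j ∂P := by
      intro i j
      have h3i : Integrable (fun ω => C.mulVec (zproc A C Lstar e L k ω) i * e k ω j) P := by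
        have heq3 : (fun ω => C.mulVec (zproc A C Lstar e L k ω) i * e k ω j)
            = fun ω => e k ω j * C.mulVec (zproc A C Lstar e L k ω) i :=
          funext fun ω => mul_comm _ _
        rw [heq3]; exact (hey L k j i).1
      have h3z : ∫ ω, C.mulVec (zproc A C Lstar e L k ω) i * e k ω j ∂P = 0 := by
        have heq3 : (fun ω => C.mulVec (zproc A C Lstar e L k ω) i * e k ω j)
            = fun ω => e k ω j * C.mulVec (zproc A C Lstar e L k ω) i :=
          funext fun ω => mul_comm _ _
        calc ∫ ω, C.mulVec (zproc A C Lstar e L k ω) i * e k ω j ∂P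
            = ∫ ω, e k ω j * C.mulVec (zproc A C Lstar e L k ω) i ∂P := by rw [heq3]
          _ = 0 := (hey L k j i).2
      have heqs : (fun ω => (e k ω i - C.mulVec (zproc A C Lstar e L k ω) i)
            * (e k ω j - C.mulVec (zproc A C Lstar e L k ω) j))
          = fun ω => e k ω i * e k ω j - e k ω i * C.mulVec (zproc A C Lstar e L k ω) j
              - C.mulVec (zproc A C Lstar e L k ω) i * e k ω j
              + C.mulVec (zproc A C Lstar e L k ω) i * C.mulVec (zproc A C Lstar e L k ω) j :=
        funext fun ω => by ring
      have hA : ∫ ω, (e k ω i * e k ω j - e k ω i * C.mulVec (zproc A C Lstar e L k ω) j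
            - C.mulVec (zproc A C Lstar e L k ω) i * e k ω j)
            + C.mulVec (zproc A C Lstar e L k ω) i * C.mulVec (zproc A C Lstar e L k ω) j ∂P
          = (∫ ω, e k ω i * e k ω j - e k ω i * C.mulVec (zproc A C Lstar e L k ω) j
              - C.mulVec (zproc A C Lstar e L k ω) i * e k ω j ∂P)
            + ∫ ω, C.mulVec (zproc A C Lstar e L k ω) i
                * C.mulVec (zproc A C Lstar e L k ω) j ∂P :=
        integral_add (((hprod k i k j).sub (hey L k i j).1).sub h3i) (hyy L k i j)
      have hB : ∫ ω, e k ω i * e k ω j - e k ω i * C.mulVec (zproc A C Lstar e L k ω) j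
            - C.mulVec (zproc A C Lstar e L k ω) i * e k ω j ∂P
          = (∫ ω, e k ω i * e k ω j - e k ω i * C.mulVec (zproc A C Lstar e L k ω) j ∂P)
            - ∫ ω, C.mulVec (zproc A C Lstar e L k ω) i * e k ω j ∂P :=
        integral_sub ((hprod k i k j).sub (hey L k i j).1) h3i
      have hC : ∫ ω, e k ω i * e k ω j - e k ω i * C.mulVec (zproc A C Lstar e L k ω) j ∂P
          = (∫ ω, e k ω i * e k ω j ∂P)
            - ∫ ω, e k ω i * C.mulVec (zproc A C Lstar e L k ω) j ∂P :=
        integral_sub (hprod k i k j) (hey L k i j).1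
      rw [heqs, hA, hB, hC, hcov k i j, (hey L k i j).2, h3z, sub_zero, sub_zero]
    calc ∫ ω, (e k ω - C.mulVec (zproc A C Lstar e L k ω)) ⬝ᵥ
          W.mulVec (e k ω - C.mulVec (zproc A C Lstar e L k ω)) ∂P
        = ∑ i, ∑ j, W i j * (Sstar i j
            + ∫ ω, C.mulVec (zproc A C Lstar e L k ω) i
                * C.mulVec (zproc A C Lstar e L k ω) j ∂P) := by
          rw [show (fun ω => (e k ω - C.mulVec (zproc A C Lstar e L k ω)) ⬝ᵥ
              W.mulVec (e k ω - C.mulVec (zproc A C Lstar e L k ω))) = _ from heq]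
          refine (integral_finset_sum _ fun i _ => integrable_finset_sum _ fun j _ =>
            (hterm L k i j).const_mul _).trans ?_
          refine Finset.sum_congr rfl fun i _ => ?_
          refine (integral_finset_sum _ fun j _ => (hterm L k i j).const_mul _).trans ?_
          refine Finset.sum_congr rfl fun j _ => ?_
          rw [integral_const_mul, hsplit i j]
      _ = (Sstar * W).trace
            + ∫ ω, (C.mulVec (zproc A C Lstar e L k ω)) ⬝ᵥ
                W.mulVec (C.mulVec (zproc A C Lstar e L k ω)) ∂P := by
          have e1 : ∀ i j : Fin q, W i j * (Sstar i j
              + ∫ ω, C.mulVec (zproc A C Lstar e L k ω) i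
                  * C.mulVec (zproc A C Lstar e L k ω) j ∂P)
              = W i j * Sstar i j + W i j * ∫ ω, C.mulVec (zproc A C Lstar e L k ω) i
                  * C.mulVec (zproc A C Lstar e L k ω) j ∂P := fun i j => mul_add _ _ _
          simp only [e1, Finset.sum_add_distrib]
          congr 1
          · simp only [Matrix.trace, Matrix.diag, Matrix.mul_apply]
            exact Finset.sum_congr rfl fun i _ => Finset.sum_congr rfl fun j _ => by
              rw [hWsym i j]; ring
          · rw [show (fun ω => (C.mulVec (zproc A C Lstar e L k ω)) ⬝ᵥ
                W.mulVec (C.mulVec (zproc A C Lstar e L k ω))) = _ from heq2]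
            refine Eq.trans ?_ (integral_finset_sum _ fun i _ => integrable_finset_sum _ fun j _ =>
              (hyy L k i j).const_mul _).symm
            refine Finset.sum_congr rfl fun i _ => ?_
            refine Eq.trans ?_ (integral_finset_sum _ fun j _ => (hyy L k i j).const_mul _).symm
            exact Finset.sum_congr rfl fun j _ => by rw [integral_const_mul]
  have hz0 : ∀ k ω, zproc A C Lstar e Lstar k ω = 0 := by
    intro k
    induction k with
    | zero => intro ω; rfl
    | succ k ih =>
      intro ω
      show (A - Lstar * C).mulVec (zproc A C Lstar e Lstar k ω)
          + (Lstar - Lstar).mulVec (e k ω) = 0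
      rw [ih ω]
      simp
  have main : ∀ L : Matrix (Fin n) (Fin q) ℝ, ∀ N : ℕ, 1 ≤ N →
      ∫ ω, VN A C Lstar W e N L ω ∂P
        = (Sstar * W).trace + (1 / (N : ℝ)) * ∑ k ∈ Finset.Icc 1 N,
            ∫ ω, (C.mulVec (zproc A C Lstar e L k ω)) ⬝ᵥ
              W.mulVec (C.mulVec (zproc A C Lstar e L k ω)) ∂P := by
    intro L N hN
    have hN0 : (N : ℝ) ≠ 0 := Nat.cast_ne_zero.mpr (by omega)
    unfold VN
    rw [integral_const_mul, integral_finset_sum _ fun k _ => hQint L k]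
    rw [Finset.sum_congr rfl fun k _ => hkey L k]
    rw [Finset.sum_add_distrib, Finset.sum_const, Nat.card_Icc, nsmul_eq_mul, mul_add]
    congr 1
    rw [show (N + 1 - 1 : ℕ) = N from by omega]
    field_simp
  refine ⟨main, ?_, ?_⟩
  · intro L N hN
    rw [main L N hN]
    have h0 : 0 ≤ (1 / (N : ℝ)) * ∑ k ∈ Finset.Icc 1 N,
        ∫ ω, (C.mulVec (zproc A C Lstar e L k ω)) ⬝ᵥ
          W.mulVec (C.mulVec (zproc A C Lstar e L k ω)) ∂P := by
      refine mul_nonneg (by positivity) (Finset.sum_nonneg fun k _ => ?_)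
      refine integral_nonneg fun ω => ?_
      have := hW.posSemidef.dotProduct_mulVec_nonneg (C.mulVec (zproc A C Lstar e L k ω))
      simpa using this
    linarith
  · intro N hN
    rw [main Lstar N hN]
    simp [hz0]
end
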